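/- Let (G,P) be a left-ordered group, z ∈ P central with z > 1, and G' = {g : ∃n, z^{−n} ≤ g ≤ z^n}. Then G' equals the subgroup of G generated by the interval [1,z], and the natural map [1,z) → G'/z^ℤ is a bijection onto the quotient of G' by the central cyclic subgroup generated by z. -/

import Mathlib

/-!
Because `z` is central, `a ≤ z ^ n` is equivalent to `z ^ (-n) ≤ a⁻¹`, so `G'` is the set of
elements `g` for which both `g` and `g⁻¹` are bounded below by a power of `z`; this set is
visibly a subgroup. The powers of `z` form a strictly increasing unbounded chain, so every
`g ∈ G'` lies in a unique interval `[z ^ k, z ^ (k + 1))`, i.e. `g = z ^ k * v` with `v ∈ [1, z)`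
and `k` unique. Existence of this decomposition gives `G' ⊆ ⟨[1, z]⟩` and surjectivity onto
`G'/z^ℤ`; uniqueness of `k` gives injectivity.
-/

/-- The left-invariant order on a left-ordered group `(G,P)`: `a ≤ b ↔ a⁻¹b ∈ P`. -/
def leP {G : Type*} [Group G] (P : Set G) (a b : G) : Prop := a⁻¹ * b ∈ P

/-- `G' = {g : ∃ n ∈ ℕ, z^{-n} ≤ g ≤ z^n}`. -/
def Gprime {G : Type*} [Group G] (P : Set G) (z : G) : Set G :=
  {g | ∃ n : ℕ, leP P (z ^ (-(n : ℤ))) g ∧ leP P g (z ^ (n : ℤ))}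

/-- The relation on `G` identifying elements differing by an integer power of `z`;
its restriction to `G'` is the quotient `G'/z^ℤ`. -/
def zRel {G : Type*} [Group G] (z : G) (a b : G) : Prop := ∃ k : ℤ, b = z ^ k * a

section LeftOrder

variable {G : Type*} [Group G] {P : Set G} {z : G}

theorem leP_mul_left_iff (c : G) {a b : G} : leP P (c * a) (c * b) ↔ leP P a b := by
  simp [leP, mul_assoc]

theorem one_leP_iff {a : G} : leP P 1 a ↔ a ∈ P := by
  simp [leP]

theorem one_mem_of_inter_inv_eq (hP2 : P ∩ P⁻¹ = {1}) : (1 : G) ∈ P :=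
  (hP2.symm ▸ rfl : (1 : G) ∈ P ∩ P⁻¹).1

theorem eq_one_of_mem_of_inv_mem (hP2 : P ∩ P⁻¹ = {1}) {a : G} (ha : a ∈ P)
    (ha' : a⁻¹ ∈ P) : a = 1 := by
  have h : a ∈ P ∩ P⁻¹ := ⟨ha, ha'⟩
  rwa [hP2] at h

theorem leP_refl (hP2 : P ∩ P⁻¹ = {1}) (a : G) : leP P a a := by
  simpa [leP] using one_mem_of_inter_inv_eq hP2

theorem leP_trans (hP1 : ∀ a ∈ P, ∀ b ∈ P, a * b ∈ P) {a b c : G} (hab : leP P a b)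
    (hbc : leP P b c) : leP P a c := by
  simpa [leP, mul_assoc] using hP1 _ hab _ hbc

theorem leP_antisymm (hP2 : P ∩ P⁻¹ = {1}) {a b : G} (hab : leP P a b) (hba : leP P b a) :
    a = b :=
  inv_mul_eq_one.mp (eq_one_of_mem_of_inv_mem hP2 hab (by simpa [leP] using hba))

theorem leP_total (hP3 : P ∪ P⁻¹ = Set.univ) (a b : G) : leP P a b ∨ leP P b a := by
  have h : a⁻¹ * b ∈ P ∪ P⁻¹ := hP3 ▸ Set.mem_univ _
  simpa [leP] using h

theorem leP_inv_inv_iff_of_commute {a b : G} (h : Commute a b) :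
    leP P a⁻¹ b⁻¹ ↔ leP P b a := by
  simp only [leP, inv_inv, h.inv_right.eq]

theorem leP_mul_mul_of_commute (hP1 : ∀ a ∈ P, ∀ b ∈ P, a * b ∈ P) {a b c d : G}
    (hac : leP P a c) (hbd : leP P b d) (ha : Commute a b) (hc : Commute c b) :
    leP P (a * b) (c * d) := by
  have h₁ : leP P (a * b) (c * b) := by
    rw [ha.eq, hc.eq]
    exact (leP_mul_left_iff b).2 hac
  exact leP_trans hP1 h₁ ((leP_mul_left_iff c).2 hbd)

theorem zpow_mem_of_nonneg (hP1 : ∀ a ∈ P, ∀ b ∈ P, a * b ∈ P) (hP2 : P ∩ P⁻¹ = {1})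
    (hz : z ∈ P) {k : ℤ} (hk : 0 ≤ k) : z ^ k ∈ P := by
  lift k to ℕ using hk
  rw [zpow_natCast]
  induction k with
  | zero => simpa using one_mem_of_inter_inv_eq hP2
  | succ n ih => simpa [pow_succ] using hP1 _ ih _ hz

theorem nonneg_of_zpow_mem (hP1 : ∀ a ∈ P, ∀ b ∈ P, a * b ∈ P) (hP2 : P ∩ P⁻¹ = {1})
    (hz : z ∈ P) (hz1 : z ≠ 1) {k : ℤ} (hk : z ^ k ∈ P) : 0 ≤ k := by
  by_contra! hneg
  have hzinv : z⁻¹ ∈ P := by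
    have h := hP1 _ hk _ (zpow_mem_of_nonneg hP1 hP2 hz (k := -k - 1) (by omega))
    rwa [← zpow_add, show k + (-k - 1) = -1 by ring, zpow_neg_one] at h
  exact hz1 (eq_one_of_mem_of_inv_mem hP2 hz hzinv)

theorem leP_zpow_zpow_iff (hP1 : ∀ a ∈ P, ∀ b ∈ P, a * b ∈ P) (hP2 : P ∩ P⁻¹ = {1})
    (hz : z ∈ P) (hz1 : z ≠ 1) {a b : ℤ} : leP P (z ^ a) (z ^ b) ↔ a ≤ b := by
  have e : (z ^ a)⁻¹ * z ^ b = z ^ (b - a) := by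
    rw [← zpow_neg, ← zpow_add, neg_add_eq_sub]
  rw [leP, e]
  exact ⟨fun h => by linarith [nonneg_of_zpow_mem hP1 hP2 hz hz1 h],
    fun h => zpow_mem_of_nonneg hP1 hP2 hz (by omega)⟩

theorem mem_Gprime_iff (hzc : ∀ g, Commute g z) {g : G} :
    g ∈ Gprime P z ↔
      ∃ n : ℕ, leP P (z ^ (-(n : ℤ))) g ∧ leP P (z ^ (-(n : ℤ))) g⁻¹ := by
  refine exists_congr fun n => and_congr_right' ?_
  rw [zpow_neg, leP_inv_inv_iff_of_commute ((hzc g).zpow_right n).symm]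

def gprimeSubgroup (hP1 : ∀ a ∈ P, ∀ b ∈ P, a * b ∈ P) (hP2 : P ∩ P⁻¹ = {1})
    (hzc : ∀ g, Commute g z) : Subgroup G where
  carrier := Gprime P z
  one_mem' := (mem_Gprime_iff hzc).2 ⟨0, by simpa using leP_refl hP2 1⟩
  mul_mem' := by
    intro a b ha hb
    obtain ⟨n, han, han'⟩ := (mem_Gprime_iff hzc).1 ha
    obtain ⟨m, hbm, hbm'⟩ := (mem_Gprime_iff hzc).1 hb
    have e : ∀ i j : ℕ, z ^ (-(i : ℤ)) * z ^ (-(j : ℤ)) = z ^ (-((i + j : ℕ) : ℤ)) := by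
      intro i j
      rw [← zpow_add]
      push_cast
      ring_nf
    have central : ∀ (g : G) (i : ℕ), Commute g (z ^ (-(i : ℤ))) :=
      fun g i => (hzc g).zpow_right _
    refine (mem_Gprime_iff hzc).2 ⟨n + m, ?_, ?_⟩
    · rw [← e]
      exact leP_mul_mul_of_commute hP1 han hbm (central _ m) (central a m)
    · rw [Nat.add_comm, ← e, mul_inv_rev]
      exact leP_mul_mul_of_commute hP1 hbm' han' (central _ n) (central b⁻¹ n)
  inv_mem' := by
    intro a ha
    obtain ⟨n, han, han'⟩ := (mem_Gprime_iff hzc).1 ha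
    exact (mem_Gprime_iff hzc).2 ⟨n, han', by rwa [inv_inv]⟩

theorem mem_Gprime_of_one_leP_of_leP (hP1 : ∀ a ∈ P, ∀ b ∈ P, a * b ∈ P) (hz : z ∈ P)
    {x : G} (h1x : leP P 1 x) (hxz : leP P x z) : x ∈ Gprime P z := by
  have hzinv : leP P (z ^ (-((1 : ℕ) : ℤ))) 1 := by simpa [leP] using hz
  exact ⟨1, leP_trans hP1 hzinv h1x, by simpa using hxz⟩

theorem exists_zpow_leP_not_zpow_succ_leP (hP1 : ∀ a ∈ P, ∀ b ∈ P, a * b ∈ P)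
    (hP2 : P ∩ P⁻¹ = {1}) (hz : z ∈ P) (hz1 : z ≠ 1) {g : G} (hg : g ∈ Gprime P z) :
    ∃ k : ℤ, leP P (z ^ k) g ∧ ¬ leP P (z ^ (k + 1)) g := by
  obtain ⟨n, hlo, hhi⟩ := hg
  obtain ⟨k, hk, hmax⟩ := Int.exists_greatest_of_bdd (P := fun k => leP P (z ^ k) g)
    ⟨n, fun j hj => (leP_zpow_zpow_iff hP1 hP2 hz hz1).1 (leP_trans hP1 hj hhi)⟩ ⟨-n, hlo⟩
  exact ⟨k, hk, fun h => by linarith [hmax _ h]⟩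

theorem exists_eq_zpow_mul_of_mem_Gprime (hP1 : ∀ a ∈ P, ∀ b ∈ P, a * b ∈ P)
    (hP2 : P ∩ P⁻¹ = {1}) (hP3 : P ∪ P⁻¹ = Set.univ) (hz : z ∈ P) (hz1 : z ≠ 1) {g : G}
    (hg : g ∈ Gprime P z) :
    ∃ (k : ℤ) (v : G), leP P 1 v ∧ leP P v z ∧ v ≠ z ∧ g = z ^ k * v := by
  obtain ⟨k, hk, hk1⟩ := exists_zpow_leP_not_zpow_succ_leP hP1 hP2 hz hz1 hg
  have hg_eq : g = z ^ k * (z ^ (-k) * g) := by group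
  have hlt : leP P g (z ^ (k + 1)) := (leP_total hP3 _ _).resolve_left hk1
  refine ⟨k, z ^ (-k) * g, ?_, ?_, ?_, hg_eq⟩
  · rwa [← leP_mul_left_iff (z ^ k), mul_one, ← hg_eq]
  · rwa [← leP_mul_left_iff (z ^ k), ← hg_eq, ← zpow_add_one]
  · intro hvz
    rw [hvz, ← zpow_add_one] at hg_eq
    exact hk1 (hg_eq ▸ leP_refl hP2 g)

theorem closure_Icc_eq_gprimeSubgroup (hP1 : ∀ a ∈ P, ∀ b ∈ P, a * b ∈ P)
    (hP2 : P ∩ P⁻¹ = {1}) (hP3 : P ∪ P⁻¹ = Set.univ) (hz : z ∈ P) (hz1 : z ≠ 1)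
    (hzc : ∀ g, Commute g z) :
    Subgroup.closure {x : G | leP P 1 x ∧ leP P x z} = gprimeSubgroup hP1 hP2 hzc := by
  apply le_antisymm
  · rw [Subgroup.closure_le]
    exact fun x hx => mem_Gprime_of_one_leP_of_leP hP1 hz hx.1 hx.2
  · intro g hg
    obtain ⟨k, v, h1v, hvz, -, rfl⟩ := exists_eq_zpow_mul_of_mem_Gprime hP1 hP2 hP3 hz hz1 hg
    have hzmem : z ∈ Subgroup.closure {x : G | leP P 1 x ∧ leP P x z} :=
      Subgroup.subset_closure ⟨one_leP_iff.2 hz, leP_refl hP2 z⟩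
    exact mul_mem (zpow_mem hzmem k) (Subgroup.subset_closure ⟨h1v, hvz⟩)

theorem nonpos_of_eq_zpow_mul (hP1 : ∀ a ∈ P, ∀ b ∈ P, a * b ∈ P) (hP2 : P ∩ P⁻¹ = {1})
    (hz : z ∈ P) (hz1 : z ≠ 1) {v w : G} (h1v : leP P 1 v) (hwz : leP P w z) (hwnz : w ≠ z)
    {k : ℤ} (hk : w = z ^ k * v) : k ≤ 0 := by
  by_contra! hpos
  have hzk : leP P z (z ^ k) := by
    simpa using (leP_zpow_zpow_iff hP1 hP2 hz hz1 (a := 1) (b := k)).2 hpos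
  have hkw : leP P (z ^ k) w := by
    simpa [hk] using (leP_mul_left_iff (z ^ k)).2 h1v
  exact hwnz (leP_antisymm hP2 hwz (leP_trans hP1 hzk hkw))

theorem zRel_equivalence (z : G) : Equivalence (zRel z) where
  refl _ := ⟨0, by simp⟩
  symm := by
    rintro a b ⟨k, rfl⟩
    exact ⟨-k, by group⟩
  trans := by
    rintro a b c ⟨k, rfl⟩ ⟨j, rfl⟩
    exact ⟨j + k, by group⟩

theorem eq_of_zRel (hP1 : ∀ a ∈ P, ∀ b ∈ P, a * b ∈ P) (hP2 : P ∩ P⁻¹ = {1})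
    (hz : z ∈ P) (hz1 : z ≠ 1) {v w : G} (h1v : leP P 1 v) (hvz : leP P v z) (hvnz : v ≠ z)
    (h1w : leP P 1 w) (hwz : leP P w z) (hwnz : w ≠ z) (h : zRel z v w) : v = w := by
  obtain ⟨k, hk⟩ := h
  have hk_nonpos := nonpos_of_eq_zpow_mul hP1 hP2 hz hz1 h1v hwz hwnz hk
  have hk_nonneg := nonpos_of_eq_zpow_mul hP1 hP2 hz hz1 h1w hvz hvnz (k := -k)
    (by rw [hk]; group)
  obtain rfl : k = 0 := by omega
  simpa using hk.symm

end LeftOrder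

/-- `G'` is the subgroup generated by `[1,z]`, and `v ↦ class of v` is a bijection
from `[1,z)` onto the image of `G'` in the quotient `G/z^ℤ` (i.e. onto `G'/z^ℤ`). -/
theorem stmt10 (G : Type*) [Group G] (P : Set G)
    (hP1 : ∀ a ∈ P, ∀ b ∈ P, a * b ∈ P)
    (hP2 : P ∩ P⁻¹ = {1}) (hP3 : P ∪ P⁻¹ = Set.univ)
    (z : G) (hz : z ∈ P) (hz1 : z ≠ 1) (hzc : ∀ g : G, g * z = z * g) :
    ((Subgroup.closure {x : G | leP P 1 x ∧ leP P x z} : Set G) = Gprime P z) ∧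
    (Function.Injective
      (fun v : {x : G // leP P 1 x ∧ leP P x z ∧ x ≠ z} => Quot.mk (zRel z) v.1)) ∧
    (Set.range
      (fun v : {x : G // leP P 1 x ∧ leP P x z ∧ x ≠ z} => Quot.mk (zRel z) v.1) =
      Quot.mk (zRel z) '' Gprime P z) := by
  refine ⟨?_, ?_, ?_⟩
  · rw [closure_Icc_eq_gprimeSubgroup hP1 hP2 hP3 hz hz1 hzc]
    rfl
  · rintro ⟨v, h1v, hvz, hvnz⟩ ⟨w, h1w, hwz, hwnz⟩ h
    have hvw : zRel z v w := ((zRel_equivalence z).eqvGen_iff).1 (Quot.eq.1 h)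
    exact Subtype.ext (eq_of_zRel hP1 hP2 hz hz1 h1v hvz hvnz h1w hwz hwnz hvw)
  · ext q
    constructor
    · rintro ⟨⟨v, h1v, hvz, -⟩, rfl⟩
      exact ⟨v, mem_Gprime_of_one_leP_of_leP hP1 hz h1v hvz, rfl⟩
    · rintro ⟨g, hg, rfl⟩
      obtain ⟨k, v, h1v, hvz, hvnz, rfl⟩ :=
        exists_eq_zpow_mul_of_mem_Gprime hP1 hP2 hP3 hz hz1 hg
      exact ⟨⟨v, h1v, hvz, hvnz⟩, Quot.sound ⟨k, rfl⟩⟩
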